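/- Let u: 𝕊² → ℝ be measurable with ∫_{𝕊²} e^{2u} dω < ∞, and set g(x) = e^{2u(𝒮⁻¹(x))} for x ∈ ℝ². Then there exist λ₀ > 0 and x₀ ∈ ℝ² such that ∫_{ℝ²} (x − x₀)·g(x)·(1+|x|²)^{−3} dx = 0 (a vector equation in ℝ²) and ∫_{ℝ²} (|x − x₀|² − λ₀²)·g(x)·(1+|x|²)^{−3} dx = 0. Equivalently, for the conformal transformation τ of 𝕊² given in stereographic coordinates by x ↦ λ₀x + x₀, the function u_τ = u∘τ + ψ_τ satisfies ∫_{𝕊²} ω e^{2u_τ(ω)} dω = 0. -/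

import Mathlib

/-!
Let `x0` be the barycentre and `l²` the variance of the finite measure
`e^{2u(𝒮⁻¹ x)} (1 + |x|²)⁻³ dx` on `ℝ²`; the three moment identities then hold by construction.
For the sphere integral, pull back to `ℝ²` and substitute `y = l x + x0`: the factor
`𝒥_τ^{3/2}` coming from `e^{2ψ_τ}` turns the weight `(1 + |x|²)⁻²` into `(1 + |y|²)⁻³`, and
`(1 + |x|²) 𝒮⁻¹(x) = (2x, |x|² - 1)` becomes `(2 (y - x0) / l, (|y - x0|² - l²) / l²)`, so the
integral is a constant multiple of the three vanishing moments.
-/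

open MeasureTheory
open scoped Classical

noncomputable section

/-- Squared Euclidean norm on `ℝ²`. -/
def sq2 (x : ℝ × ℝ) : ℝ := x.1 ^ 2 + x.2 ^ 2

/-- Euclidean dot product on `ℝ³`. -/
def dot3 (a b : Fin 3 → ℝ) : ℝ := a 0 * b 0 + a 1 * b 1 + a 2 * b 2

/-- Squared Euclidean norm on `ℝ³`. -/
def norm3sq (a : Fin 3 → ℝ) : ℝ := dot3 a a

/-- Stereographic projection from the north pole. -/
def SP (ω : Fin 3 → ℝ) : ℝ × ℝ := (ω 0 / (1 - ω 2), ω 1 / (1 - ω 2))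

/-- Inverse stereographic projection. -/
def SPinv (x : ℝ × ℝ) : Fin 3 → ℝ :=
  ![2 * x.1 / (1 + sq2 x), 2 * x.2 / (1 + sq2 x), (sq2 x - 1) / (1 + sq2 x)]

/-- Identification `ℝ² ≅ ℂ`. -/
def cx (x : ℝ × ℝ) : ℂ := ⟨x.1, x.2⟩

/-- Identification `ℂ ≅ ℝ²`. -/
def uncx (z : ℂ) : ℝ × ℝ := (z.re, z.im)

/-- The group `SL(2,ℂ)`. -/
abbrev SL2C := Matrix.SpecialLinearGroup (Fin 2) ℂ

/-- The Möbius transformation associated to `A ∈ SL(2,ℂ)`. -/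
def TA (A : SL2C) (z : ℂ) : ℂ := (A.1 0 0 * z + A.1 0 1) / (A.1 1 0 * z + A.1 1 1)

/-- The north pole of `𝕊²`. -/
def northPole : Fin 3 → ℝ := ![0, 0, 1]

/-- The conformal transformation of `𝕊²` induced by `A ∈ SL(2,ℂ)` via stereographic
projection, extended continuously over the poles. -/
def tauA (A : SL2C) (ω : Fin 3 → ℝ) : Fin 3 → ℝ :=
  if ω 2 = 1 then
    if A.1 1 0 = 0 then northPole else SPinv (uncx (A.1 0 0 / A.1 1 0))
  else if A.1 1 0 * cx (SP ω) + A.1 1 1 = 0 then northPole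
  else SPinv (uncx (TA A (cx (SP ω))))

/-- The Jacobian `𝒥_{τ_A}(ω) = ((1+|z|²)/(|az+b|²+|cz+d|²))²`, `z = 𝒮(ω)`,
extended continuously over the north pole. -/
def jacA (A : SL2C) (ω : Fin 3 → ℝ) : ℝ :=
  if ω 2 = 1 then (1 / (Complex.normSq (A.1 0 0) + Complex.normSq (A.1 1 0))) ^ 2
  else
    ((1 + Complex.normSq (cx (SP ω))) /
        (Complex.normSq (A.1 0 0 * cx (SP ω) + A.1 0 1) +
          Complex.normSq (A.1 1 0 * cx (SP ω) + A.1 1 1))) ^ 2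

/-- `∫_{𝕊²} f dω = (1/π) ∫_{ℝ²} f(𝒮⁻¹(x)) (1+|x|²)⁻² dx`, the integral against the
normalized surface measure of `𝕊²`, written in stereographic coordinates. -/
def sphInt {E : Type*} [NormedAddCommGroup E] [NormedSpace ℝ E]
    (f : (Fin 3 → ℝ) → E) : E :=
  (1 / Real.pi) • ∫ x : ℝ × ℝ, ((1 + sq2 x)⁻¹) ^ 2 • f (SPinv x)

/-- Integrability of `f : 𝕊² → ℝ` with respect to the normalized surface measure,
expressed in stereographic coordinates. -/
def SphIntegrable (f : (Fin 3 → ℝ) → ℝ) : Prop :=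
  Integrable fun x : ℝ × ℝ => ((1 + sq2 x)⁻¹) ^ 2 * f (SPinv x)

/-- The mass `M_τ = ∫_{𝕊²} 𝒥_τ^{3/2} dω`. -/
def massA (A : SL2C) : ℝ := sphInt fun ω => jacA A ω ^ (3 / 2 : ℝ)

/-- The center of mass `a_τ = M_τ⁻¹ ∫_{𝕊²} ω 𝒥_τ^{3/2}(ω) dω`. -/
def comA (A : SL2C) : Fin 3 → ℝ :=
  (massA A)⁻¹ • sphInt fun ω => jacA A ω ^ (3 / 2 : ℝ) • ω

/-- The normalizing constant `c_τ = -(1/2) ln M_τ`. -/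
def cA (A : SL2C) : ℝ := -(1 / 2) * Real.log (massA A)

/-- `ψ_τ = (3/4) ln 𝒥_τ + c_τ`. -/
def psiA (A : SL2C) (ω : Fin 3 → ℝ) : ℝ := (3 / 4) * Real.log (jacA A ω) + cA A

/-- `|∇v(x)|²` for `v : ℝ² → ℝ`. -/
def gradSq (v : ℝ × ℝ → ℝ) (x : ℝ × ℝ) : ℝ :=
  fderiv ℝ v x (1, 0) ^ 2 + fderiv ℝ v x (0, 1) ^ 2

/-- The Dirichlet energy `∫_{𝕊²} |∇_{𝕊²} u|² dω = (1/(4π)) ∫_{ℝ²} |∇(u∘𝒮⁻¹)(x)|² dx`. -/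
def gradTerm (u : (Fin 3 → ℝ) → ℝ) : ℝ :=
  (1 / (4 * Real.pi)) * ∫ x : ℝ × ℝ, gradSq (fun y => u (SPinv y)) x

/-- Membership in the Sobolev space `H¹(𝕊²)`. -/
def MemH1 (u : (Fin 3 → ℝ) → ℝ) : Prop :=
  SphIntegrable u ∧ SphIntegrable (fun ω => u ω ^ 2) ∧
    Integrable fun x : ℝ × ℝ => gradSq (fun y => u (SPinv y)) x

/-- The Chang–Gui functional `I_α`. -/
def CG (α : ℝ) (u : (Fin 3 → ℝ) → ℝ) : ℝ :=
  α * gradTerm u + 2 * sphInt u -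
    (1 / 2) * Real.log
      ((sphInt fun ω => Real.exp (2 * u ω)) ^ 2 -
        norm3sq (sphInt fun ω => Real.exp (2 * u ω) • ω))

end

/-- Jacobian of the conformal map given by `x ↦ λx + x₀` in stereographic coordinates. -/
noncomputable def jacAff (l : ℝ) (x0 : ℝ × ℝ) (ω : Fin 3 → ℝ) : ℝ :=
  l ^ 2 * ((1 + sq2 (SP ω)) / (1 + sq2 (l • SP ω + x0))) ^ 2

/-- The conformal map of `𝕊²` given by `x ↦ λx + x₀` in stereographic coordinates. -/
noncomputable def tauAff (l : ℝ) (x0 : ℝ × ℝ) (ω : Fin 3 → ℝ) : Fin 3 → ℝ := SPinv (l • SP ω + x0)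

/-- `ψ_τ` for the conformal map `x ↦ λx + x₀`. -/
noncomputable def psiAff (l : ℝ) (x0 : ℝ × ℝ) (ω : Fin 3 → ℝ) : ℝ :=
  (3 / 4) * Real.log (jacAff l x0 ω) +
    (-(1 / 2) * Real.log (sphInt fun ξ => jacAff l x0 ξ ^ (3 / 2 : ℝ)))

lemma sq2_nonneg (x : ℝ × ℝ) : 0 ≤ sq2 x := by
  unfold sq2; positivity

lemma one_add_sq2_pos (x : ℝ × ℝ) : 0 < 1 + sq2 x := by
  linarith [sq2_nonneg x]

lemma sq2_eq_zero_iff {x : ℝ × ℝ} : sq2 x = 0 ↔ x = 0 := by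
  simp [sq2, Prod.ext_iff, add_eq_zero_iff_of_nonneg, sq_nonneg]

lemma continuous_sq2 : Continuous sq2 := by
  unfold sq2; fun_prop

lemma SP_SPinv (x : ℝ × ℝ) : SP (SPinv x) = x := by
  have h := (one_add_sq2_pos x).ne'
  have h2 : 1 - (sq2 x - 1) / (1 + sq2 x) = 2 / (1 + sq2 x) := by field_simp; ring
  ext <;> simp [SP, SPinv, h2] <;> field_simp

lemma integral_eq_zero_of_integral_eval_eq_zero {X ι : Type*} [MeasurableSpace X]
    {μ : Measure X} [Fintype ι] {E : ι → Type*} [∀ i, NormedAddCommGroup (E i)]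
    [∀ i, NormedSpace ℝ (E i)] [∀ i, CompleteSpace (E i)] {f : X → Π i, E i}
    (h : ∀ i, ∫ x, f x i ∂μ = 0) : ∫ x, f x ∂μ = 0 := by
  by_cases hf : ∀ i, Integrable (f · i) μ
  · ext i
    rw [eval_integral hf]
    exact h i
  · exact integral_undef (mt Integrable.eval hf)

section Moments

variable {μ : Measure (ℝ × ℝ)} {ρ : ℝ × ℝ → ℝ}

lemma MeasureTheory.Integrable.mul_of_abs_le_mul_one_add_sq2
    (hρ : Integrable (fun x => (1 + sq2 x) * ρ x) μ) {h : ℝ × ℝ → ℝ} (hh : Continuous h)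
    {C : ℝ} (hle : ∀ x, |h x| ≤ C * (1 + sq2 x)) :
    Integrable (fun x => h x * ρ x) μ := by
  have hquot : Continuous fun x => h x / (1 + sq2 x) :=
    hh.div (continuous_const.add continuous_sq2) fun x => (one_add_sq2_pos x).ne'
  refine (hρ.bdd_mul hquot.aestronglyMeasurable (c := C) (.of_forall fun x => ?_)).congr
    (.of_forall fun x => ?_)
  · rw [Real.norm_eq_abs, abs_div, abs_of_pos (one_add_sq2_pos x)]
    exact (div_le_iff₀ (one_add_sq2_pos x)).mpr (hle x)
  · field_simp [(one_add_sq2_pos x).ne']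

lemma MeasureTheory.Integrable.of_one_add_sq2_mul
    (hρ : Integrable (fun x => (1 + sq2 x) * ρ x) μ) : Integrable ρ μ := by
  simpa using hρ.mul_of_abs_le_mul_one_add_sq2 (h := fun _ => 1) continuous_const (C := 1)
    fun x => by simpa using sq2_nonneg x

lemma integral_sub_const_mul_eq (hρ : Integrable (fun x => (1 + sq2 x) * ρ x) μ)
    {h : ℝ × ℝ → ℝ} (hh : Continuous h) {C : ℝ} (hle : ∀ x, |h x| ≤ C * (1 + sq2 x)) (c : ℝ) :
    ∫ x, (h x - c) * ρ x ∂μ = ∫ x, h x * ρ x ∂μ - c * ∫ x, ρ x ∂μ := by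
  simp only [sub_mul]
  rw [integral_sub (hρ.mul_of_abs_le_mul_one_add_sq2 hh hle) (hρ.of_one_add_sq2_mul.const_mul c),
    integral_const_mul]

lemma abs_fst_le_one_add_sq2 (x : ℝ × ℝ) : |x.1| ≤ 1 + sq2 x := by
  unfold sq2; nlinarith [sq_nonneg (|x.1| - 1), sq_abs x.1, sq_nonneg x.2]

lemma abs_snd_le_one_add_sq2 (x : ℝ × ℝ) : |x.2| ≤ 1 + sq2 x := by
  unfold sq2; nlinarith [sq_nonneg (|x.2| - 1), sq_abs x.2, sq_nonneg x.1]

lemma abs_sq2_sub_le (x x0 : ℝ × ℝ) : |sq2 (x - x0)| ≤ (2 + 2 * sq2 x0) * (1 + sq2 x) := by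
  rw [abs_of_nonneg (sq2_nonneg _)]
  simp only [sq2, Prod.fst_sub, Prod.snd_sub]
  nlinarith [sq_nonneg (x.1 + x0.1), sq_nonneg (x.2 + x0.2), sq_nonneg x0.1, sq_nonneg x0.2,
    mul_nonneg (sq_nonneg x.1) (add_nonneg (sq_nonneg x0.1) (sq_nonneg x0.2)),
    mul_nonneg (sq_nonneg x.2) (add_nonneg (sq_nonneg x0.1) (sq_nonneg x0.2))]

-- `x0` is the barycentre of `ρ μ` and `l` its standard deviation.
lemma exists_moments_eq_zero [μ.IsOpenPosMeasure] (hpos : ∀ x, 0 < ρ x)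
    (hρ : Integrable (fun x => (1 + sq2 x) * ρ x) μ) :
    ∃ l : ℝ, 0 < l ∧ ∃ x0 : ℝ × ℝ,
      ∫ x, (x.1 - x0.1) * ρ x ∂μ = 0 ∧ ∫ x, (x.2 - x0.2) * ρ x ∂μ = 0 ∧
      ∫ x, (sq2 (x - x0) - l ^ 2) * ρ x ∂μ = 0 := by
  set D := ∫ x, ρ x ∂μ
  have hD : 0 < D := by
    refine (integral_pos_iff_support_of_nonneg (fun x => (hpos x).le) hρ.of_one_add_sq2_mul).2 ?_
    rw [Function.support_eq_univ fun x => (hpos x).ne']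
    exact isOpen_univ.measure_pos μ Set.univ_nonempty
  set x0 : ℝ × ℝ := ((∫ x, x.1 * ρ x ∂μ) / D, (∫ x, x.2 * ρ x ∂μ) / D)
  have hcont : Continuous fun x : ℝ × ℝ => sq2 (x - x0) :=
    continuous_sq2.comp (by fun_prop)
  set N := ∫ x, sq2 (x - x0) * ρ x ∂μ
  have hN : 0 < N := by
    have hsupp : {x0}ᶜ ⊆ Function.support fun x => sq2 (x - x0) * ρ x := fun x hx =>
      mul_ne_zero (mt sq2_eq_zero_iff.1 (sub_ne_zero.2 hx)) (hpos x).ne'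
    refine (integral_pos_iff_support_of_nonneg (fun x => mul_nonneg (sq2_nonneg _) (hpos x).le)
      (hρ.mul_of_abs_le_mul_one_add_sq2 hcont (abs_sq2_sub_le · x0))).2 ?_
    exact (isOpen_compl_singleton.measure_pos μ ⟨x0 + (1, 0), by simp⟩).trans_le
      (measure_mono hsupp)
  refine ⟨√(N / D), Real.sqrt_pos.2 (div_pos hN hD), x0, ?_, ?_, ?_⟩
  · rw [integral_sub_const_mul_eq hρ continuous_fst (C := 1)
        (by simpa using abs_fst_le_one_add_sq2),
      div_mul_cancel₀ _ hD.ne', sub_self]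
  · rw [integral_sub_const_mul_eq hρ continuous_snd (C := 1)
        (by simpa using abs_snd_le_one_add_sq2),
      div_mul_cancel₀ _ hD.ne', sub_self]
  · rw [integral_sub_const_mul_eq hρ hcont (abs_sq2_sub_le · x0),
      Real.sq_sqrt (div_pos hN hD).le, div_mul_cancel₀ _ hD.ne', sub_self]

end Moments

lemma exp_two_mul_psiAff_SPinv {l : ℝ} (hl : 0 < l) (x0 x : ℝ × ℝ) :
    Real.exp (2 * psiAff l x0 (SPinv x)) =
      Real.exp (-Real.log (sphInt fun ξ => jacAff l x0 ξ ^ (3 / 2 : ℝ))) *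
        (l * ((1 + sq2 x) / (1 + sq2 (l • x + x0)))) ^ 3 := by
  have hJ : 0 < l * ((1 + sq2 x) / (1 + sq2 (l • x + x0))) :=
    mul_pos hl (div_pos (one_add_sq2_pos _) (one_add_sq2_pos _))
  rw [psiAff, jacAff, SP_SPinv, ← mul_pow, Real.log_pow]
  generalize sphInt (fun ξ => jacAff l x0 ξ ^ (3 / 2 : ℝ)) = M
  generalize l * ((1 + sq2 x) / (1 + sq2 (l • x + x0))) = a at hJ ⊢
  rw [show 2 * (3 / 4 * ((2 : ℕ) * Real.log a) + -(1 / 2) * Real.log M) =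
      -Real.log M + (3 : ℕ) * Real.log a by push_cast; ring,
    Real.exp_add, Real.exp_nat_mul, Real.exp_log hJ]

-- At `y = l • x + x0` the coefficient vector is `(2x, |x|² - 1) = (1 + |x|²) 𝒮⁻¹(x)`.
noncomputable def momentIntegrand (u : (Fin 3 → ℝ) → ℝ) (l : ℝ) (x0 y : ℝ × ℝ) : Fin 3 → ℝ :=
  ![2 / l * ((y.1 - x0.1) * Real.exp (2 * u (SPinv y)) * ((1 + sq2 y)⁻¹) ^ 3),
    2 / l * ((y.2 - x0.2) * Real.exp (2 * u (SPinv y)) * ((1 + sq2 y)⁻¹) ^ 3),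
    1 / l ^ 2 * ((sq2 (y - x0) - l ^ 2) * Real.exp (2 * u (SPinv y)) * ((1 + sq2 y)⁻¹) ^ 3)]

lemma integral_momentIntegrand_eq_zero {u : (Fin 3 → ℝ) → ℝ} {l : ℝ} {x0 : ℝ × ℝ}
    (h1 : ∫ x : ℝ × ℝ,
      (x.1 - x0.1) * Real.exp (2 * u (SPinv x)) * ((1 + sq2 x)⁻¹) ^ 3 = 0)
    (h2 : ∫ x : ℝ × ℝ,
      (x.2 - x0.2) * Real.exp (2 * u (SPinv x)) * ((1 + sq2 x)⁻¹) ^ 3 = 0)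
    (h3 : ∫ x : ℝ × ℝ,
      (sq2 (x - x0) - l ^ 2) * Real.exp (2 * u (SPinv x)) * ((1 + sq2 x)⁻¹) ^ 3 = 0) :
    ∫ y, momentIntegrand u l x0 y = 0 := by
  refine integral_eq_zero_of_integral_eval_eq_zero fun i => ?_
  fin_cases i <;> simp [momentIntegrand, integral_const_mul, h1, h2, h3, -inv_pow]

lemma sq_inv_smul_exp_smul_SPinv {l : ℝ} (hl : 0 < l) (u : (Fin 3 → ℝ) → ℝ) (x0 x : ℝ × ℝ) :
    ((1 + sq2 x)⁻¹) ^ 2 •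
        (Real.exp (2 * (u (tauAff l x0 (SPinv x)) + psiAff l x0 (SPinv x))) • SPinv x) =
      (l ^ 3 * Real.exp (-Real.log (sphInt fun ξ => jacAff l x0 ξ ^ (3 / 2 : ℝ)))) •
        momentIntegrand u l x0 (l • x + x0) := by
  have hshift : sq2 (l • x) = l ^ 2 * sq2 x := by
    simp only [sq2, Prod.smul_fst, Prod.smul_snd, smul_eq_mul]; ring
  have := (one_add_sq2_pos x).ne'
  have := (one_add_sq2_pos (l • x + x0)).ne'
  rw [tauAff, SP_SPinv, mul_add, Real.exp_add, exp_two_mul_psiAff_SPinv hl]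
  ext i
  fin_cases i <;> simp [momentIntegrand, SPinv, hshift] <;> field_simp

lemma sphInt_exp_smul_eq_zero_of_moments {u : (Fin 3 → ℝ) → ℝ} {l : ℝ} (hl : 0 < l)
    {x0 : ℝ × ℝ}
    (h1 : ∫ x : ℝ × ℝ,
      (x.1 - x0.1) * Real.exp (2 * u (SPinv x)) * ((1 + sq2 x)⁻¹) ^ 3 = 0)
    (h2 : ∫ x : ℝ × ℝ,
      (x.2 - x0.2) * Real.exp (2 * u (SPinv x)) * ((1 + sq2 x)⁻¹) ^ 3 = 0)
    (h3 : ∫ x : ℝ × ℝ,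
      (sq2 (x - x0) - l ^ 2) * Real.exp (2 * u (SPinv x)) * ((1 + sq2 x)⁻¹) ^ 3 = 0) :
    sphInt (fun ω => Real.exp (2 * (u (tauAff l x0 ω) + psiAff l x0 ω)) • ω) = 0 := by
  have hrescaled : ∫ x : ℝ × ℝ, momentIntegrand u l x0 (l • x + x0) = 0 := by
    have := Measure.integral_comp_smul volume (fun z => momentIntegrand u l x0 (z + x0)) l
    rw [integral_add_right_eq_self, integral_momentIntegrand_eq_zero h1 h2 h3,
      smul_zero] at this
    exact this
  rw [sphInt, integral_congr_ae (.of_forall (sq_inv_smul_exp_smul_SPinv hl u x0)),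
    integral_smul, hrescaled, smul_zero, smul_zero]

theorem center_of_mass_zero_general (u : (Fin 3 → ℝ) → ℝ)
    (hint : SphIntegrable fun ω => Real.exp (2 * u ω)) :
    ∃ l : ℝ, 0 < l ∧ ∃ x0 : ℝ × ℝ,
      (∫ x : ℝ × ℝ,
        (x.1 - x0.1) * Real.exp (2 * u (SPinv x)) * ((1 + sq2 x)⁻¹) ^ 3 = 0) ∧
      (∫ x : ℝ × ℝ,
        (x.2 - x0.2) * Real.exp (2 * u (SPinv x)) * ((1 + sq2 x)⁻¹) ^ 3 = 0) ∧
      (∫ x : ℝ × ℝ,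
        (sq2 (x - x0) - l ^ 2) * Real.exp (2 * u (SPinv x)) * ((1 + sq2 x)⁻¹) ^ 3 = 0) ∧
      sphInt (fun ω => Real.exp (2 * (u (tauAff l x0 ω) + psiAff l x0 ω)) • ω) = 0 := by
  have hweight : Integrable fun x : ℝ × ℝ =>
      (1 + sq2 x) * (Real.exp (2 * u (SPinv x)) * ((1 + sq2 x)⁻¹) ^ 3) :=
    hint.congr (.of_forall fun x => by field_simp [(one_add_sq2_pos x).ne'])
  obtain ⟨l, hl, x0, h1, h2, h3⟩ := exists_moments_eq_zero (μ := volume)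
    (fun x => by have := one_add_sq2_pos x; positivity) hweight
  simp only [← mul_assoc] at h1 h2 h3
  exact ⟨l, hl, x0, h1, h2, h3, sphInt_exp_smul_eq_zero_of_moments hl h1 h2 h3⟩

/-- the center of mass of `e^{2u}` can be moved to the origin by a
conformal transformation `x ↦ λ₀x + x₀`. -/
theorem center_of_mass_zero (u : (Fin 3 → ℝ) → ℝ) (hu : Measurable u)
    (hint : SphIntegrable fun ω => Real.exp (2 * u ω)) :
    ∃ l : ℝ, 0 < l ∧ ∃ x0 : ℝ × ℝ,
      (∫ x : ℝ × ℝ,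
        (x.1 - x0.1) * Real.exp (2 * u (SPinv x)) * ((1 + sq2 x)⁻¹) ^ 3 = 0) ∧
      (∫ x : ℝ × ℝ,
        (x.2 - x0.2) * Real.exp (2 * u (SPinv x)) * ((1 + sq2 x)⁻¹) ^ 3 = 0) ∧
      (∫ x : ℝ × ℝ,
        (sq2 (x - x0) - l ^ 2) * Real.exp (2 * u (SPinv x)) * ((1 + sq2 x)⁻¹) ^ 3 = 0) ∧
      sphInt (fun ω => Real.exp (2 * (u (tauAff l x0 ω) + psiAff l x0 ω)) • ω) = 0 :=
  center_of_mass_zero_general u hint
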